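/- arXiv:1808.08298 — 5 statements merged into one kernel-verified Lean document; each statement's English description precedes it below -/
import Mathlib

section
/- Let X be a locally compact Hausdorff space with a continuous proper G-action and let π : C₀(X) → B(H) be a nondegenerate covariant representation on the G-Hilbert space H. Then for every compact operator T on H and every φ ∈ C₀(X), the norm ‖π(φ) · (u_g T u_g⁻¹)‖ tends to 0 as g → ∞ along the cocompact filter on G. -/
/-!
Covariance and unitarity turn `‖π φ * u_g T u_g⁻¹‖` into `‖π (g⁻¹ • φ) * T‖`. Properness of the
action makes `(g⁻¹ • φ) * ψ` tend to `0` in `C₀(X)` for all `φ, ψ`, so by nondegeneracy the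
operators `π (g⁻¹ • φ)`, all of norm at most `‖φ‖`, tend strongly to `0`. By Ascoli, strong
convergence of a bounded family is uniform on compact sets, in particular on the image of the unit
ball under the compact operator `T`, which gives norm convergence of `π (g⁻¹ • φ) * T`.
-/

open scoped ZeroAtInfty
open Filter MeasureTheory Topology

noncomputable section

variable {G : Type*} [Group G] [TopologicalSpace G] [IsTopologicalGroup G]
  [LocallyCompactSpace G] [SecondCountableTopology G] [T2Space G]
variable {X : Type*} [TopologicalSpace X] [LocallyCompactSpace X] [T2Space X]
variable [MulAction G X] [ContinuousSMul G X]
variable {H : Type*} [NormedAddCommGroup H] [InnerProductSpace ℂ H] [CompleteSpace H]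
  [SecondCountableTopology H]

/-- The translation action of `G` on `C₀(X, ℂ)`: `(g • φ)(x) = φ(g⁻¹ • x)`. -/
def C0smul (g : G) (φ : C₀(X, ℂ)) : C₀(X, ℂ) where
  toFun := fun x => φ (g⁻¹ • x)
  continuous_toFun := φ.continuous.comp (continuous_const_smul g⁻¹)
  zero_at_infty' := φ.zero_at_infty'.comp
    ((Homeomorph.smul (g⁻¹ : G)).toCocompactMap.cocompact_tendsto')

/-- Conjugation `g(T) = u_g T u_g⁻¹` by the unitary representation `u`. -/
def conjU (u : G →* unitary (H →L[ℂ] H)) (g : G) (T : H →L[ℂ] H) : H →L[ℂ] H :=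
  (u g : H →L[ℂ] H) * T * ((u g⁻¹ : unitary (H →L[ℂ] H)) : H →L[ℂ] H)

/-- Membership in `C₀(G, K(H))`: norm-continuous, compact-operator valued, and
norm vanishing along the cocompact filter on `G`. -/
def InC0GK (f : G → (H →L[ℂ] H)) : Prop :=
  Continuous f ∧ (∀ g, IsCompactOperator (⇑(f g))) ∧
    Tendsto (fun g => ‖f g‖) (cocompact G) (𝓝 0)


theorem IsProperMap.eventually_cocompact_forall_smul_notMem {G X : Type*} [Group G]
    [TopologicalSpace G] [TopologicalSpace X] [MulAction G X]
    (hproper : IsProperMap fun p : G × X => (p.1 • p.2, p.2))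
    {K L : Set X} (hK : IsCompact K) (hL : IsCompact L) :
    ∀ᶠ g in cocompact G, ∀ x ∈ L, g • x ∉ K := by
  have hC : IsCompact (Prod.fst '' ((fun p : G × X => (p.1 • p.2, p.2)) ⁻¹' K ×ˢ L)) :=
    (hproper.isCompact_preimage (hK.prod hL)).image continuous_fst
  filter_upwards [hC.compl_mem_cocompact] with g hg x hx hgx
  exact hg ⟨(g, x), ⟨hgx, hx⟩, rfl⟩

namespace ZeroAtInftyContinuousMap

variable {X E : Type*} [TopologicalSpace X] [NormedAddCommGroup E]

theorem exists_isCompact_norm_lt (φ : C₀(X, E)) {ε : ℝ} (hε : 0 < ε) :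
    ∃ K, IsCompact K ∧ ∀ x ∉ K, ‖φ x‖ < ε := by
  obtain ⟨K, hK, hKc⟩ := mem_cocompact.mp (zero_at_infty φ (Metric.ball_mem_nhds 0 hε))
  exact ⟨K, hK, fun x hx => mem_ball_zero_iff.mp (hKc hx)⟩

theorem norm_le_of_forall {φ : C₀(X, E)} {C : ℝ} (hC : 0 ≤ C) (h : ∀ x, ‖φ x‖ ≤ C) :
    ‖φ‖ ≤ C := by
  rw [← norm_toBCF_eq_norm]
  exact (BoundedContinuousFunction.norm_le hC).2 h

theorem norm_apply_le (φ : C₀(X, E)) (x : X) : ‖φ x‖ ≤ ‖φ‖ := by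
  rw [← norm_toBCF_eq_norm]
  exact φ.toBCF.norm_coe_le_norm x

end ZeroAtInftyContinuousMap

section Translation

open ZeroAtInftyContinuousMap

variable {G X : Type*} [Group G] [TopologicalSpace G] [TopologicalSpace X] [MulAction G X]
  [ContinuousSMul G X]

@[simp]
theorem C0smul_apply (g : G) (φ : C₀(X, ℂ)) (x : X) : C0smul g φ x = φ (g⁻¹ • x) := rfl

theorem C0smul_C0smul_inv (g : G) (φ : C₀(X, ℂ)) : C0smul g (C0smul g⁻¹ φ) = φ := by
  ext x
  simp [smul_smul]

theorem norm_C0smul_le (g : G) (φ : C₀(X, ℂ)) : ‖C0smul g φ‖ ≤ ‖φ‖ :=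
  norm_le_of_forall (norm_nonneg φ) fun _ => norm_apply_le φ _

/-- Whenever `g • x` is far from the support of `φ` or `x` far from that of `ψ`, one factor of
`φ (g • x) * ψ x` is small; properness makes this hold for all `x` once `g` leaves a compact set. -/
theorem eventually_norm_C0smul_inv_mul_le
    (hproper : IsProperMap fun p : G × X => (p.1 • p.2, p.2)) (φ ψ : C₀(X, ℂ)) {δ : ℝ}
    (hδ : 0 < δ) :
    ∀ᶠ g in cocompact G, ‖C0smul g⁻¹ φ * ψ‖ ≤ δ * (‖φ‖ + ‖ψ‖) := by
  obtain ⟨K, hK, hφK⟩ := φ.exists_isCompact_norm_lt hδ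
  obtain ⟨L, hL, hψL⟩ := ψ.exists_isCompact_norm_lt hδ
  filter_upwards [hproper.eventually_cocompact_forall_smul_notMem hK hL] with g hg
  refine norm_le_of_forall (by positivity) fun x => ?_
  have hφx := norm_apply_le φ (g • x)
  have hψx := norm_apply_le ψ x
  rw [mul_apply, C0smul_apply, inv_inv, norm_mul]
  by_cases hx : x ∈ L
  · have := hφK _ (hg x hx)
    nlinarith [norm_nonneg (φ (g • x)), norm_nonneg (ψ x)]
  · have := hψL x hx
    nlinarith [norm_nonneg (φ (g • x)), norm_nonneg (ψ x)]

theorem tendsto_C0smul_inv_mul (hproper : IsProperMap fun p : G × X => (p.1 • p.2, p.2))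
    (φ ψ : C₀(X, ℂ)) : Tendsto (fun g : G => C0smul g⁻¹ φ * ψ) (cocompact G) (𝓝 0) := by
  rw [← Asymptotics.isLittleO_one_iff ℝ, Asymptotics.isLittleO_iff]
  intro c hc
  have hC : 0 < ‖φ‖ + ‖ψ‖ + 1 := by positivity
  filter_upwards [eventually_norm_C0smul_inv_mul_le hproper φ ψ (div_pos hc hC)] with g hg
  calc ‖C0smul g⁻¹ φ * ψ‖ ≤ c / (‖φ‖ + ‖ψ‖ + 1) * (‖φ‖ + ‖ψ‖) := hg
    _ ≤ c * ‖(1 : ℝ)‖ := by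
      rw [norm_one, mul_one, div_mul_eq_mul_div, div_le_iff₀ hC]
      nlinarith

end Translation

section Operators

variable {ι 𝕜 D E F : Type*} [RCLike 𝕜] [NormedAddCommGroup D] [NormedSpace 𝕜 D]
  [NormedAddCommGroup E] [NormedSpace 𝕜 E] [NormedAddCommGroup F] [NormedSpace 𝕜 F]
  {l : Filter ι} {A : ι → E →L[𝕜] F} {C : ℝ}

theorem equicontinuous_of_norm_le (hA : ∀ i, ‖A i‖ ≤ C) : Equicontinuous fun i => ⇑(A i) :=
  ((NormedSpace.equicontinuous_TFAE A).out 5 1 :).mp ⟨C, hA⟩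

theorem tendsto_apply_zero_of_dense_span (hA : ∀ i, ‖A i‖ ≤ C) {S : Set E}
    (hS : Dense (Submodule.span 𝕜 S : Set E)) (h : ∀ x ∈ S, Tendsto (fun i => A i x) l (𝓝 0))
    (x : E) : Tendsto (fun i => A i x) l (𝓝 0) := by
  let V : Submodule 𝕜 E :=
    { carrier := {x | Tendsto (fun i => A i x) l (𝓝 0)}
      add_mem' := fun ha hb => by simpa using ha.add hb
      zero_mem' := by simpa using tendsto_const_nhds
      smul_mem' := fun c x hx => by simpa using hx.const_smul c }
  have hV : IsClosed (V : Set E) :=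
    (equicontinuous_of_norm_le hA).isClosed_setOfPred_tendsto continuous_const
  exact hV.closure_subset_iff.mpr (Submodule.span_le.mpr h) (hS x)

theorem tendsto_comp_zero_of_isCompactOperator (hA : ∀ i, ‖A i‖ ≤ C)
    (hA0 : ∀ x, Tendsto (fun i => A i x) l (𝓝 0)) {T : D →L[𝕜] E} (hT : IsCompactOperator T) :
    Tendsto (fun i => (A i).comp T) l (𝓝 0) := by
  set K := closure (T '' Metric.closedBall 0 1)
  have hunif : TendstoUniformlyOn (fun i => ⇑(A i)) 0 l K := by
    have := (EquicontinuousOn.tendsto_uniformOnFun_iff_pi' (𝔖 := {K})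
      (by simpa using hT.isCompact_closure_image_closedBall 1)
      (by simpa using (equicontinuous_of_norm_le hA).equicontinuousOn K) l 0).mpr
      (tendsto_pi_nhds.mpr fun x => hA0 x)
    exact UniformOnFun.tendsto_iff_tendstoUniformlyOn.mp this K rfl
  rw [Metric.tendstoUniformlyOn_iff] at hunif
  rw [Metric.tendsto_nhds]
  intro ε hε
  filter_upwards [hunif (ε / 2) (half_pos hε)] with i hi
  rw [dist_zero_right]
  refine (ContinuousLinearMap.opNorm_le_of_unit_norm (half_pos hε).le fun x hx => ?_).trans_lt
    (half_lt_self hε)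
  have hTx : T x ∈ K := subset_closure ⟨x, by simp [hx], rfl⟩
  simpa using (hi (T x) hTx).le

end Operators

theorem CStarRing.norm_conj_mul_conj {R : Type*} [NormedRing R] [StarRing R] [CStarRing R]
    (U : unitary R) (a b : R) :
    ‖(U : R) * a * (star U : unitary R) * ((U : R) * b * (star U : unitary R))‖ = ‖a * b‖ := by
  have hU : ((star U : unitary R) : R) * U = 1 := Unitary.coe_star_mul_self U
  calc _ = ‖(U : R) * (a * (((star U : unitary R) : R) * U) * b) * (star U : unitary R)‖ := by
        simp only [mul_assoc]
    _ = ‖a * b‖ := by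
        rw [hU, mul_one, CStarRing.norm_mul_coe_unitary, CStarRing.norm_coe_unitary_mul]

open scoped CStarAlgebra in
theorem statement_0_general
    (u : G →* unitary (H →L[ℂ] H))
    (π : C₀(X, ℂ) →⋆ₙₐ[ℂ] (H →L[ℂ] H))
    (hπnd : Dense (Submodule.span ℂ (Set.range fun p : C₀(X, ℂ) × H => π p.1 p.2) : Set H))
    (hcov : ∀ (g : G) (φ : C₀(X, ℂ)),
      (u g : H →L[ℂ] H) * π φ * ((u g⁻¹ : unitary (H →L[ℂ] H)) : H →L[ℂ] H) = π (C0smul g φ))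
    (hproper : IsProperMap fun p : G × X => (p.1 • p.2, p.2))
    (T : H →L[ℂ] H) (hT : IsCompactOperator (⇑T)) (φ : C₀(X, ℂ)) :
    Tendsto (fun g : G => ‖π φ * conjU u g T‖) (cocompact G) (𝓝 0) := by
  have hconj (g : G) : ‖π φ * conjU u g T‖ = ‖(π (C0smul g⁻¹ φ)).comp T‖ := by
    have hφ : π φ = u g * π (C0smul g⁻¹ φ) * (u g⁻¹ : H →L[ℂ] H) := by
      rw [hcov, C0smul_C0smul_inv]
    rw [conjU, hφ, map_inv, ← Unitary.star_eq_inv, CStarRing.norm_conj_mul_conj]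
    rfl
  have hbdd (g : G) : ‖π (C0smul g⁻¹ φ)‖ ≤ ‖φ‖ :=
    (NonUnitalStarAlgHom.norm_apply_le π _).trans (norm_C0smul_le _ _)
  have hstrong : ∀ y, Tendsto (fun g : G => π (C0smul g⁻¹ φ) y) (cocompact G) (𝓝 0) := by
    refine tendsto_apply_zero_of_dense_span hbdd hπnd ?_
    rintro _ ⟨⟨ψ, v⟩, rfl⟩
    have hprod := ((map_continuous π).tendsto 0).comp (tendsto_C0smul_inv_mul hproper φ ψ)
    rw [map_zero] at hprod
    refine (((ContinuousLinearMap.apply ℂ H v).continuous.tendsto 0).comp hprod).congr fun g => ?_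
    simp only [Function.comp_apply, ContinuousLinearMap.apply_apply, map_mul]
    rfl
  simp_rw [hconj]
  simpa using (tendsto_comp_zero_of_isCompactOperator hbdd hstrong hT).norm

theorem statement_0
    (u : G →* unitary (H →L[ℂ] H))
    (hu : ∀ v : H, Continuous fun g : G => (u g : H →L[ℂ] H) v)
    (π : C₀(X, ℂ) →⋆ₙₐ[ℂ] (H →L[ℂ] H))
    (hπnd : Dense (Submodule.span ℂ (Set.range fun p : C₀(X, ℂ) × H => π p.1 p.2) : Set H))
    (hcov : ∀ (g : G) (φ : C₀(X, ℂ)),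
      (u g : H →L[ℂ] H) * π φ * ((u g⁻¹ : unitary (H →L[ℂ] H)) : H →L[ℂ] H) = π (C0smul g φ))
    (hproper : IsProperMap fun p : G × X => (p.1 • p.2, p.2))
    (T : H →L[ℂ] H) (hT : IsCompactOperator (⇑T)) (φ : C₀(X, ℂ)) :
    Tendsto (fun g : G => ‖π φ * conjU u g T‖) (cocompact G) (𝓝 0) :=
  statement_0_general u π hπnd hcov hproper T hT φ

end
end

section
/- Let X be a locally compact Hausdorff space with a continuous proper G-action and let π : C₀(X) → B(H) be a nondegenerate covariant representation on the G-Hilbert space H. Then for every φ ∈ C₀(X) and every vector v ∈ H, the norm ‖π(g·φ) v‖ tends to 0 as g → ∞ along the cocompact filter on G. -/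
/-! For `ψ ∈ C₀(X)` and `w ∈ H` we have `π(g • φ) (π ψ w) = π((g • φ) ψ) w`, and
`‖(g • φ) ψ‖ → 0` as `g → ∞`: for `δ > 0`, properness makes the set of `g` for which
`g • {‖φ‖ ≥ δ}` meets `{‖ψ‖ ≥ δ}` compact, and off that set the product is `O(δ)` everywhere.
The operators `π(g • φ)` all have norm at most `‖φ‖`, so they are equicontinuous and the vectors
`v` with `π(g • φ) v → 0` form a closed subspace; it contains every `π ψ w`, whose span is dense
by nondegeneracy. -/

open scoped ZeroAtInfty
open Filter MeasureTheory Topology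

noncomputable section

variable {G : Type*} [Group G] [TopologicalSpace G] [IsTopologicalGroup G]
  [LocallyCompactSpace G] [SecondCountableTopology G] [T2Space G]
variable {X : Type*} [TopologicalSpace X] [LocallyCompactSpace X] [T2Space X]
variable [MulAction G X] [ContinuousSMul G X]
variable {H : Type*} [NormedAddCommGroup H] [InnerProductSpace ℂ H] [CompleteSpace H]
  [SecondCountableTopology H]

open scoped CStarAlgebra

namespace ZeroAtInftyContinuousMap

variable {α β : Type*} [TopologicalSpace α] [SeminormedAddCommGroup β]

lemma norm_coe_le_norm (f : C₀(α, β)) (x : α) : ‖f x‖ ≤ ‖f‖ :=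
  norm_toBCF_eq_norm (f := f) ▸ f.toBCF.norm_coe_le_norm x

lemma norm_le (f : C₀(α, β)) {C : ℝ} (hC : 0 ≤ C) : ‖f‖ ≤ C ↔ ∀ x, ‖f x‖ ≤ C :=
  norm_toBCF_eq_norm (f := f) ▸ BoundedContinuousFunction.norm_le hC

lemma isCompact_setOf_le_norm (f : C₀(α, β)) {ε : ℝ} (hε : 0 < ε) :
    IsCompact {x | ε ≤ ‖f x‖} := by
  obtain ⟨K, hK, hKε⟩ := mem_cocompact.mp <|
    (tendsto_zero_iff_norm_tendsto_zero.mp f.zero_at_infty').eventually (gt_mem_nhds hε)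
  refine hK.of_isClosed_subset (isClosed_le continuous_const (map_continuous f).norm) ?_
  intro x hx
  by_contra hxK
  exact (hKε hxK).not_ge hx.out

end ZeroAtInftyContinuousMap

lemma norm_C0smul_le_s2 {Γ α : Type*} [Group Γ] [TopologicalSpace Γ] [TopologicalSpace α]
    [MulAction Γ α] [ContinuousSMul Γ α] (g : Γ) (φ : C₀(α, ℂ)) : ‖C0smul g φ‖ ≤ ‖φ‖ :=
  ((C0smul g φ).norm_le (norm_nonneg φ)).mpr fun x ↦ φ.norm_coe_le_norm (g⁻¹ • x)

lemma norm_mul_le_mul_add_of_lt_or_lt {R : Type*} [NonUnitalSeminormedRing R] {a b : R} {δ : ℝ}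
    (h : ‖a‖ < δ ∨ ‖b‖ < δ) : ‖a * b‖ ≤ δ * (‖a‖ + ‖b‖) := by
  refine (norm_mul_le a b).trans ?_
  rcases h with h | h <;> nlinarith [norm_nonneg a, norm_nonneg b]

lemma tendsto_zero_of_forall_eventually_norm_le_mul {ι E : Type*} [SeminormedAddCommGroup E]
    {l : Filter ι} {f : ι → E} (C : ℝ) (h : ∀ δ > 0, ∀ᶠ i in l, ‖f i‖ ≤ δ * C) :
    Tendsto f l (𝓝 0) := by
  refine NormedAddGroup.tendsto_nhds_zero.mpr fun ε hε ↦ ?_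
  have hC : 0 < |C| + 1 := by positivity
  filter_upwards [h (ε / (|C| + 1)) (by positivity)] with i hi
  calc ‖f i‖ ≤ ε / (|C| + 1) * C := hi
    _ < ε / (|C| + 1) * (|C| + 1) := by gcongr; linarith [le_abs_self C]
    _ = ε := div_mul_cancel₀ ε hC.ne'

lemma ContinuousLinearMap.tendsto_apply_of_dense_span {ι 𝕜 E F : Type*}
    [NontriviallyNormedField 𝕜] [SeminormedAddCommGroup E] [NormedSpace 𝕜 E]
    [SeminormedAddCommGroup F] [NormedSpace 𝕜 F] {l : Filter ι} {T : ι → E →L[𝕜] F} {C : ℝ}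
    (hT : ∀ i, ‖T i‖ ≤ C) {s : Set E} (hs : Dense (Submodule.span 𝕜 s : Set E))
    (h : ∀ v ∈ s, Tendsto (T · v) l (𝓝 0)) (v : E) : Tendsto (T · v) l (𝓝 0) := by
  let S : Submodule 𝕜 E :=
    { carrier := {v | Tendsto (T · v) l (𝓝 0)}
      add_mem' := fun ha hb ↦ by simpa using ha.add hb
      zero_mem' := by simpa using tendsto_const_nhds
      smul_mem' := fun c _ ha ↦ by simpa using ha.const_smul c }
  have hequi : Equicontinuous ((↑) ∘ T : ι → E → F) :=
    ((NormedSpace.equicontinuous_TFAE T).out 5 1).mp (by exact ⟨C, hT⟩)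
  have hS : IsClosed (S : Set E) := hequi.isClosed_setOfPred_tendsto (f := 0) continuous_const
  have hspan : closure (Submodule.span 𝕜 s : Set E) ⊆ S :=
    hS.closure_subset_iff.mpr (Submodule.span_le.mpr h)
  exact hspan (hs.closure_eq ▸ Set.mem_univ v)

section ProperAction

variable {Γ α : Type*} [Group Γ] [TopologicalSpace Γ] [TopologicalSpace α] [MulAction Γ α]
  [ProperSMul Γ α]

lemma ProperSMul.eventually_forall_norm_lt_or_norm_lt {β γ : Type*} [SeminormedAddCommGroup β]
    [SeminormedAddCommGroup γ] (φ : C₀(α, β)) (ψ : C₀(α, γ)) {δ : ℝ} (hδ : 0 < δ) :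
    ∀ᶠ g in cocompact Γ, ∀ x, ‖φ (g⁻¹ • x)‖ < δ ∨ ‖ψ x‖ < δ := by
  have hcpt := ProperSMul.isCompact_setOfPred_inter_nonempty (G := Γ)
    (φ.isCompact_setOf_le_norm hδ) (ψ.isCompact_setOf_le_norm hδ)
  filter_upwards [hcpt.compl_mem_cocompact] with g hg x
  by_contra! h
  exact hg ⟨x, ⟨g⁻¹ • x, h.1, smul_inv_smul g x⟩, h.2⟩

variable [ContinuousSMul Γ α]

lemma tendsto_C0smul_mul_cocompact (φ ψ : C₀(α, ℂ)) :
    Tendsto (fun g : Γ ↦ C0smul g φ * ψ) (cocompact Γ) (𝓝 0) := by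
  refine tendsto_zero_of_forall_eventually_norm_le_mul (‖φ‖ + ‖ψ‖) fun δ hδ ↦ ?_
  filter_upwards [ProperSMul.eventually_forall_norm_lt_or_norm_lt φ ψ hδ] with g hg
  refine ((C0smul g φ * ψ).norm_le (by positivity)).mpr fun x ↦ ?_
  calc ‖φ (g⁻¹ • x) * ψ x‖ ≤ δ * (‖φ (g⁻¹ • x)‖ + ‖ψ x‖) := norm_mul_le_mul_add_of_lt_or_lt (hg x)
    _ ≤ δ * (‖φ‖ + ‖ψ‖) := by gcongr <;> apply ZeroAtInftyContinuousMap.norm_coe_le_norm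

lemma tendsto_C0smul_apply_apply {E : Type*} [NormedAddCommGroup E] [InnerProductSpace ℂ E]
    [CompleteSpace E] (π : C₀(α, ℂ) →⋆ₙₐ[ℂ] (E →L[ℂ] E)) (φ ψ : C₀(α, ℂ)) (w : E) :
    Tendsto (fun g : Γ ↦ π (C0smul g φ) (π ψ w)) (cocompact Γ) (𝓝 0) := by
  have h := ((map_continuous π).tendsto 0).comp (tendsto_C0smul_mul_cocompact (Γ := Γ) φ ψ)
  rw [map_zero] at h
  simpa [Function.comp_def] using ((ContinuousLinearMap.apply ℂ E w).continuous.tendsto 0).comp h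

end ProperAction

theorem statement_2_general
    (π : C₀(X, ℂ) →⋆ₙₐ[ℂ] (H →L[ℂ] H))
    (hπnd : Dense (Submodule.span ℂ (Set.range fun p : C₀(X, ℂ) × H => π p.1 p.2) : Set H))
    (hproper : IsProperMap fun p : G × X => (p.1 • p.2, p.2))
    (φ : C₀(X, ℂ)) (v : H) :
    Tendsto (fun g : G => ‖π (C0smul g φ) v‖) (cocompact G) (𝓝 0) := by
  have : ProperSMul G X := ⟨hproper⟩
  refine tendsto_norm_zero.comp <|
    ContinuousLinearMap.tendsto_apply_of_dense_span (C := ‖φ‖) (fun g ↦ ?_) hπnd ?_ v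
  · exact (NonUnitalStarAlgHom.norm_apply_le π _).trans (norm_C0smul_le_s2 g φ)
  · rintro _ ⟨⟨ψ, w⟩, rfl⟩
    exact tendsto_C0smul_apply_apply π φ ψ w

theorem statement_2
    (u : G →* unitary (H →L[ℂ] H))
    (hu : ∀ v : H, Continuous fun g : G => (u g : H →L[ℂ] H) v)
    (π : C₀(X, ℂ) →⋆ₙₐ[ℂ] (H →L[ℂ] H))
    (hπnd : Dense (Submodule.span ℂ (Set.range fun p : C₀(X, ℂ) × H => π p.1 p.2) : Set H))
    (hcov : ∀ (g : G) (φ : C₀(X, ℂ)),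
      (u g : H →L[ℂ] H) * π φ * ((u g⁻¹ : unitary (H →L[ℂ] H)) : H →L[ℂ] H) = π (C0smul g φ))
    (hproper : IsProperMap fun p : G × X => (p.1 • p.2, p.2))
    (φ : C₀(X, ℂ)) (v : H) :
    Tendsto (fun g : G => ‖π (C0smul g φ) v‖) (cocompact G) (𝓝 0) :=
  statement_2_general π hπnd hproper φ v

end
end

section
/- Let H be a Hilbert space with a nondegenerate representation π of C₀(X) for a locally compact Hausdorff space X. Let (f_j)_{j∈J} and (f'_j)_{j∈J} be families of real-valued functions in C₀(X), indexed by a set J, such that the sums ∑_{j∈J} π(f_j)² and ∑_{j∈J} π(f'_j)² converge in the strong operator topology (as nets of finite partial sums) to bounded operators B and B' respectively. Then for every family (T_j)_{j∈J} in B(H) with sup_j ‖T_j‖ < ∞, the sum ∑_{j∈J} π(f'_j) T_j π(f_j) converges in the strong operator topology on H to a bounded operator whose norm is at most ‖B'‖^{1/2} ‖B‖^{1/2} · sup_j ‖T_j‖; in particular the norm bound has the form C · sup_j ‖T_j‖ with a constant C > 0 independent of the family (T_j). -/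
open scoped ZeroAtInfty
open Filter Topology

open scoped InnerProductSpace
open ContinuousLinearMap

/-!
Write `aⱼ = π fⱼ` and `bⱼ = π f'ⱼ`, which are self-adjoint because the functions are real, and
`M = supⱼ ‖Tⱼ‖`. For each vector `v` the hypothesis on `B` says `∑ ‖aⱼ v‖² = ⟪v, B v⟫ ≤ ‖B‖ ‖v‖²`.
Pairing a finite
partial sum `w = ∑ bⱼ* Tⱼ aⱼ v` with itself and applying Cauchy–Schwarz over `j` gives
`‖w‖² ≤ M (∑ ‖bⱼ w‖²)^{1/2} (∑ ‖aⱼ v‖²)^{1/2} ≤ M ‖B'‖^{1/2} ‖w‖ (∑ ‖aⱼ v‖²)^{1/2}`.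
This bounds every partial sum, and since `∑ ‖aⱼ v‖²` converges it also gives the Cauchy
criterion, so the series converges for every `v` to a bounded operator of norm at most
`‖B'‖^{1/2} ‖B‖^{1/2} M`.
-/

section Summation

variable {J 𝕜 E F : Type*}

theorem summable_of_norm_sum_le_mul_sqrt [NormedAddCommGroup E] [CompleteSpace E]
    {g : J → E} {φ : J → ℝ} (hφ : Summable φ) (c : ℝ)
    (h : ∀ s : Finset J, ‖∑ j ∈ s, g j‖ ≤ c * √(∑ j ∈ s, φ j)) : Summable g := by
  rw [summable_iff_vanishing_norm]
  intro ε hε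
  obtain ⟨s, hs⟩ := summable_iff_vanishing_norm.1 hφ ((ε / (|c| + 1)) ^ 2) (by positivity)
  refine ⟨s, fun t ht => ?_⟩
  have hsqrt : √(∑ j ∈ t, φ j) ≤ ε / (|c| + 1) := by
    refine Real.sqrt_le_iff.2 ⟨by positivity, ?_⟩
    exact (le_abs_self _).trans (hs t ht).le
  calc ‖∑ j ∈ t, g j‖ ≤ c * √(∑ j ∈ t, φ j) := h t
    _ ≤ |c| * (ε / (|c| + 1)) := by gcongr; exact le_abs_self c
    _ < ε := by
        rw [mul_div_assoc', div_lt_iff₀ (by positivity)]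
        nlinarith [abs_nonneg c]

variable [RCLike 𝕜] [NormedAddCommGroup E] [NormedSpace 𝕜 E]
  [NormedAddCommGroup F] [NormedSpace 𝕜 F]

theorem ContinuousLinearMap.exists_hasSum_apply_of_norm_sum_le (g : J → E →L[𝕜] F)
    (hg : ∀ v, Summable fun j => g j v) {C : ℝ} (hC : 0 ≤ C)
    (hbound : ∀ v (s : Finset J), ‖∑ j ∈ s, g j v‖ ≤ C * ‖v‖) :
    ∃ S : E →L[𝕜] F, (∀ v, HasSum (fun j => g j v) (S v)) ∧ ‖S‖ ≤ C := by
  let L : E →ₗ[𝕜] F := linearMapOfTendsto (l := atTop) (fun v => ∑' j, g j v)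
    (fun s : Finset J => ∑ j ∈ s, (g j : E →ₗ[𝕜] F)) (tendsto_pi_nhds.2 fun v => by
      simp only [LinearMap.coe_sum, Finset.sum_apply, coe_coe]
      exact (hg v).hasSum)
  have hL : ∀ v, HasSum (fun j => g j v) (L v) := fun v => (hg v).hasSum
  have hLC : ∀ v, ‖L v‖ ≤ C * ‖v‖ := fun v => le_of_tendsto' (hL v).norm (hbound v)
  exact ⟨L.mkContinuous C hLC, hL, LinearMap.mkContinuous_norm_le L hC hLC⟩

end Summation

section Hilbert

variable {J 𝕜 E F G K : Type*} [RCLike 𝕜]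
  [NormedAddCommGroup E] [InnerProductSpace 𝕜 E] [NormedAddCommGroup F] [InnerProductSpace 𝕜 F]
  [NormedAddCommGroup G] [InnerProductSpace 𝕜 G] [NormedAddCommGroup K] [InnerProductSpace 𝕜 K]

theorem hasSum_norm_sq_of_hasSum_adjoint_comp [CompleteSpace E] [CompleteSpace F]
    {a : J → E →L[𝕜] F} {B : E →L[𝕜] E}
    (hB : ∀ v, HasSum (fun j => adjoint (a j) (a j v)) (B v)) (v : E) :
    HasSum (fun j => ‖a j v‖ ^ 2) (RCLike.re ⟪v, B v⟫_𝕜) := by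
  simpa only [innerSL_apply_apply, adjoint_inner_right, inner_self_eq_norm_sq] using
    RCLike.hasSum_re 𝕜 ((innerSL 𝕜 v).hasSum (hB v))

theorem sqrt_sum_norm_sq_le_of_hasSum_adjoint_comp [CompleteSpace E] [CompleteSpace F]
    {a : J → E →L[𝕜] F} {B : E →L[𝕜] E}
    (hB : ∀ v, HasSum (fun j => adjoint (a j) (a j v)) (B v)) (v : E) (s : Finset J) :
    √(∑ j ∈ s, ‖a j v‖ ^ 2) ≤ √‖B‖ * ‖v‖ := by
  have hsum : ∑ j ∈ s, ‖a j v‖ ^ 2 ≤ ‖B‖ * ‖v‖ ^ 2 :=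
    calc ∑ j ∈ s, ‖a j v‖ ^ 2 ≤ RCLike.re ⟪v, B v⟫_𝕜 :=
          sum_le_hasSum s (fun j _ => sq_nonneg _) (hasSum_norm_sq_of_hasSum_adjoint_comp hB v)
      _ ≤ ‖v‖ * ‖B v‖ := (RCLike.re_le_norm _).trans (norm_inner_le_norm _ _)
      _ ≤ ‖v‖ * (‖B‖ * ‖v‖) := by gcongr; exact B.le_opNorm v
      _ = ‖B‖ * ‖v‖ ^ 2 := by ring
  calc √(∑ j ∈ s, ‖a j v‖ ^ 2) ≤ √(‖B‖ * ‖v‖ ^ 2) := Real.sqrt_le_sqrt hsum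
    _ = √‖B‖ * ‖v‖ := by rw [Real.sqrt_mul (norm_nonneg _), Real.sqrt_sq (norm_nonneg _)]

variable [CompleteSpace G] [CompleteSpace K] {b : J → K →L[𝕜] G} {B' : K →L[𝕜] K}

theorem norm_sum_adjoint_comp_le (hB' : ∀ u, HasSum (fun j => adjoint (b j) (b j u)) (B' u))
    (a : J → E →L[𝕜] F) {T : J → F →L[𝕜] G} {M : ℝ} (hM₀ : 0 ≤ M) (hM : ∀ j, ‖T j‖ ≤ M)
    (v : E) (s : Finset J) :
    ‖∑ j ∈ s, adjoint (b j) (T j (a j v))‖ ≤ M * √‖B'‖ * √(∑ j ∈ s, ‖a j v‖ ^ 2) := by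
  set w := ∑ j ∈ s, adjoint (b j) (T j (a j v))
  rcases (norm_nonneg w).eq_or_lt with hw | hw
  · rw [← hw]; positivity
  refine le_of_mul_le_mul_right ?_ hw
  rw [← sq]
  have hww : ⟪w, w⟫_𝕜 = ∑ j ∈ s, ⟪b j w, T j (a j v)⟫_𝕜 :=
    calc ⟪w, w⟫_𝕜 = ⟪w, ∑ j ∈ s, adjoint (b j) (T j (a j v))⟫_𝕜 := rfl
      _ = _ := by simp only [inner_sum, adjoint_inner_right]
  calc ‖w‖ ^ 2 = RCLike.re ⟪w, w⟫_𝕜 := (inner_self_eq_norm_sq w).symm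
    _ ≤ ‖∑ j ∈ s, ⟪b j w, T j (a j v)⟫_𝕜‖ := hww ▸ RCLike.re_le_norm _
    _ ≤ ∑ j ∈ s, ‖b j w‖ * (M * ‖a j v‖) := by
        refine (norm_sum_le _ _).trans (Finset.sum_le_sum fun j _ => ?_)
        refine (norm_inner_le_norm _ _).trans (by gcongr; exact (T j).le_of_opNorm_le (hM j) _)
    _ = M * ∑ j ∈ s, ‖b j w‖ * ‖a j v‖ := by
        rw [Finset.mul_sum]; exact Finset.sum_congr rfl fun j _ => by ring
    _ ≤ M * (√(∑ j ∈ s, ‖b j w‖ ^ 2) * √(∑ j ∈ s, ‖a j v‖ ^ 2)) := by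
        gcongr; exact Real.sum_mul_le_sqrt_mul_sqrt _ _ _
    _ ≤ M * (√‖B'‖ * ‖w‖ * √(∑ j ∈ s, ‖a j v‖ ^ 2)) := by
        gcongr; exact sqrt_sum_norm_sq_le_of_hasSum_adjoint_comp hB' w s
    _ = M * √‖B'‖ * √(∑ j ∈ s, ‖a j v‖ ^ 2) * ‖w‖ := by ring

theorem exists_hasSum_adjoint_comp_apply [CompleteSpace E] [CompleteSpace F]
    {a : J → E →L[𝕜] F} {B : E →L[𝕜] E}
    (hB : ∀ v, HasSum (fun j => adjoint (a j) (a j v)) (B v))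
    (hB' : ∀ u, HasSum (fun j => adjoint (b j) (b j u)) (B' u))
    {T : J → F →L[𝕜] G} {M : ℝ} (hM₀ : 0 ≤ M) (hM : ∀ j, ‖T j‖ ≤ M) :
    ∃ S : E →L[𝕜] K, (∀ v, HasSum (fun j => adjoint (b j) (T j (a j v))) (S v)) ∧
      ‖S‖ ≤ √‖B'‖ * √‖B‖ * M := by
  have hpartial := norm_sum_adjoint_comp_le hB' a hM₀ hM
  refine exists_hasSum_apply_of_norm_sum_le (fun j => adjoint (b j) ∘L T j ∘L a j)
    (fun v => ?_) (by positivity) (fun v s => ?_)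
  · exact summable_of_norm_sum_le_mul_sqrt
      (hasSum_norm_sq_of_hasSum_adjoint_comp hB v).summable _ (hpartial v)
  · calc ‖∑ j ∈ s, adjoint (b j) (T j (a j v))‖
        ≤ M * √‖B'‖ * √(∑ j ∈ s, ‖a j v‖ ^ 2) := hpartial v s
      _ ≤ M * √‖B'‖ * (√‖B‖ * ‖v‖) := by
          gcongr; exact sqrt_sum_norm_sq_le_of_hasSum_adjoint_comp hB v s
      _ = √‖B'‖ * √‖B‖ * M * ‖v‖ := by ring

end Hilbert

theorem ZeroAtInftyContinuousMap.isSelfAdjoint_of_forall_im_eq_zero {X : Type*}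
    [TopologicalSpace X] {g : C₀(X, ℂ)} (hg : ∀ x, (g x).im = 0) : IsSelfAdjoint g := by
  ext x
  exact Complex.conj_eq_iff_im.2 (hg x)

theorem statement_3_general
    {X : Type*} [TopologicalSpace X]
    {H : Type*} [NormedAddCommGroup H] [InnerProductSpace ℂ H] [CompleteSpace H]
    {J : Type*}
    (π : C₀(X, ℂ) →⋆ₙₐ[ℂ] (H →L[ℂ] H))
    (f f' : J → C₀(X, ℂ))
    (hf_real : ∀ (j : J) (x : X), (f j x).im = 0)
    (hf'_real : ∀ (j : J) (x : X), (f' j x).im = 0)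
    (B B' : H →L[ℂ] H)
    (hB : ∀ v : H, HasSum (fun j : J => π (f j) (π (f j) v)) (B v))
    (hB' : ∀ v : H, HasSum (fun j : J => π (f' j) (π (f' j) v)) (B' v)) :
    ∃ C : ℝ, 0 < C ∧
      ∀ T : J → (H →L[ℂ] H), BddAbove (Set.range fun j : J => ‖T j‖) →
        ∃ S : H →L[ℂ] H,
          (∀ v : H, HasSum (fun j : J => π (f' j) ((T j) (π (f j) v))) (S v)) ∧
          ‖S‖ ≤ Real.sqrt ‖B'‖ * Real.sqrt ‖B‖ * (⨆ j : J, ‖T j‖) ∧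
          ‖S‖ ≤ C * ⨆ j : J, ‖T j‖ := by
  have adjoint_eq (g : J → C₀(X, ℂ)) (hg : ∀ j x, (g j x).im = 0) (j : J) :
      adjoint (π (g j)) = π (g j) :=
    isSelfAdjoint_iff'.1
      ((ZeroAtInftyContinuousMap.isSelfAdjoint_of_forall_im_eq_zero (hg j)).map π)
  have hf := adjoint_eq f hf_real
  have hf' := adjoint_eq f' hf'_real
  refine ⟨√‖B'‖ * √‖B‖ + 1, by positivity, fun T hT => ?_⟩
  have hM₀ : 0 ≤ ⨆ j, ‖T j‖ := Real.iSup_nonneg fun j => norm_nonneg _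
  obtain ⟨S, hS, hS_norm⟩ := exists_hasSum_adjoint_comp_apply (a := fun j => π (f j))
    (b := fun j => π (f' j)) (by simpa only [hf] using hB) (by simpa only [hf'] using hB')
    hM₀ (le_ciSup hT)
  refine ⟨S, by simpa only [hf'] using hS, hS_norm, hS_norm.trans ?_⟩
  gcongr
  linarith

theorem statement_3
    {X : Type*} [TopologicalSpace X] [LocallyCompactSpace X] [T2Space X]
    {H : Type*} [NormedAddCommGroup H] [InnerProductSpace ℂ H] [CompleteSpace H]
    {J : Type*}
    (π : C₀(X, ℂ) →⋆ₙₐ[ℂ] (H →L[ℂ] H))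
    (hπnd : Dense (Submodule.span ℂ (Set.range fun p : C₀(X, ℂ) × H => π p.1 p.2) : Set H))
    (f f' : J → C₀(X, ℂ))
    (hf_real : ∀ (j : J) (x : X), (f j x).im = 0)
    (hf'_real : ∀ (j : J) (x : X), (f' j x).im = 0)
    (B B' : H →L[ℂ] H)
    (hB : ∀ v : H, HasSum (fun j : J => π (f j) (π (f j) v)) (B v))
    (hB' : ∀ v : H, HasSum (fun j : J => π (f' j) (π (f' j) v)) (B' v)) :
    ∃ C : ℝ, 0 < C ∧
      ∀ T : J → (H →L[ℂ] H), BddAbove (Set.range fun j : J => ‖T j‖) →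
        ∃ S : H →L[ℂ] H,
          (∀ v : H, HasSum (fun j : J => π (f' j) ((T j) (π (f j) v))) (S v)) ∧
          ‖S‖ ≤ Real.sqrt ‖B'‖ * Real.sqrt ‖B‖ * (⨆ j : J, ‖T j‖) ∧
          ‖S‖ ≤ C * ⨆ j : J, ‖T j‖ :=
  statement_3_general π f f' hf_real hf'_real B B' hB hB'
end

section
/- Let X be a locally compact Hausdorff space with a continuous proper G-action, let π : C₀(X) → B(H) be a nondegenerate covariant representation on the G-Hilbert space H, and let T ∈ B(H) be such that u_h T u_h⁻¹ − T is a compact operator for every h ∈ G. Then for every φ ∈ C₀(X) and every h ∈ G, the map g ↦ π(φ)(u_{gh} T u_{gh}⁻¹ − u_g T u_g⁻¹) belongs to C₀(G, K(H)). -/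
open scoped ZeroAtInfty
open Filter MeasureTheory Topology

noncomputable section

variable {G : Type*} [Group G] [TopologicalSpace G] [IsTopologicalGroup G]
  [LocallyCompactSpace G] [SecondCountableTopology G] [T2Space G]
variable {X : Type*} [TopologicalSpace X] [LocallyCompactSpace X] [T2Space X]
variable [MulAction G X] [ContinuousSMul G X]
variable {H : Type*} [NormedAddCommGroup H] [InnerProductSpace ℂ H] [CompleteSpace H]
  [SecondCountableTopology H]

/-!
Put `K = u_h T u_h⁻¹ - T`; then `u_{gh} T u_{gh}⁻¹ - u_g T u_g⁻¹ = u_g K u_g*`, so the map is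
`g ↦ (π(φ) u_g) K u_g*`, which is compact-valued. Right multiplication by a compact operator turns
strong convergence of uniformly bounded operators into norm convergence; together with compactness
of adjoints this makes the map norm-continuous. For the decay, covariance gives
`π(φ) u_g π(ψ) w = π(φ · g(ψ)) u_g w`, and `‖φ · g(ψ)‖ → 0` as `g → ∞` by properness of the
action; by nondegeneracy this yields `π(φ) u_g → 0` strongly, hence `‖π(φ) u_g K‖ → 0`.
-/

open Metric

theorem TotallyBounded.image_of_uniformControl {α β γ : Type*} [PseudoMetricSpace β]
    [PseudoMetricSpace γ] {s : Set α} {f : α → β} {g : α → γ} (hg : TotallyBounded (g '' s))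
    (hfg : ∀ ε > 0, ∃ δ > 0, ∀ x ∈ s, ∀ y ∈ s, dist (g x) (g y) < δ → dist (f x) (f y) < ε) :
    TotallyBounded (f '' s) := by
  refine totallyBounded_iff.mpr fun ε hε => ?_
  obtain ⟨δ, hδ, hδε⟩ := hfg ε hε
  obtain ⟨u, hus, huf, hcover⟩ :=
    Set.exists_subset_image_finite_and.mp (finite_approx_of_totallyBounded hg δ hδ)
  refine ⟨f '' u, huf.image f, ?_⟩
  rintro _ ⟨y, hy, rfl⟩
  obtain ⟨_, ⟨c, hcu, rfl⟩, hc⟩ := Set.mem_iUnion₂.mp (hcover ⟨y, hy, rfl⟩)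
  exact Set.mem_iUnion₂.mpr ⟨f c, ⟨c, hcu, rfl⟩, hδε y hy c (hus hcu) hc⟩

namespace ContinuousLinearMap

variable {𝕜 D E F : Type*} [NontriviallyNormedField 𝕜] [SeminormedAddCommGroup D]
  [NormedSpace 𝕜 D] [SeminormedAddCommGroup E] [NormedSpace 𝕜 E] [SeminormedAddCommGroup F]
  [NormedSpace 𝕜 F] {ι : Type*} {l : Filter ι} {S : ι → E →L[𝕜] F} {S₀ : E →L[𝕜] F} {M : ℝ}

theorem equicontinuous_of_norm_le (hS : ∀ i, ‖S i‖ ≤ M) : Equicontinuous fun i => ⇑(S i) :=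
  ((NormedSpace.equicontinuous_TFAE S).out 5 1).mp (⟨M, hS⟩ : ∃ C, ∀ i, ‖S i‖ ≤ C)

theorem tendsto_apply_of_dense_span_s8 (hS : ∀ i, ‖S i‖ ≤ M) {s : Set E}
    (hs : Dense (Submodule.span 𝕜 s : Set E))
    (h : ∀ v ∈ s, Tendsto (fun i => S i v) l (𝓝 (S₀ v))) (v : E) :
    Tendsto (fun i => S i v) l (𝓝 (S₀ v)) := by
  have hclosed : IsClosed {x | Tendsto (fun i => S i x) l (𝓝 (S₀ x))} :=
    (equicontinuous_of_norm_le hS).isClosed_setOfPred_tendsto S₀.continuous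
  have hspan : (Submodule.span 𝕜 s : Set E) ⊆ {x | Tendsto (fun i => S i x) l (𝓝 (S₀ x))} := by
    intro x hx
    induction hx using Submodule.span_induction with
    | mem x hx => exact h x hx
    | zero => simpa using tendsto_const_nhds
    | add x y _ _ hx hy => simpa using hx.add hy
    | smul c x _ hx => simpa using hx.const_smul c
  exact hclosed.closure_subset_iff.mpr hspan (hs v)

theorem tendstoUniformlyOn_of_tendsto_apply (hS : ∀ i, ‖S i‖ ≤ M)
    (h : ∀ v, Tendsto (fun i => S i v) l (𝓝 (S₀ v))) {K : Set E} (hK : IsCompact K) :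
    TendstoUniformlyOn (fun i => ⇑(S i)) S₀ l K := by
  have hunif := (EquicontinuousOn.tendsto_uniformOnFun_iff_pi' (𝔖 := {K}) (by simpa using hK)
    (by simpa using (equicontinuous_of_norm_le hS).equicontinuousOn K) l S₀).mpr
    (by rw [Set.sUnion_singleton]; exact tendsto_pi_nhds.mpr fun x => h x)
  exact UniformOnFun.tendsto_iff_tendstoUniformlyOn.mp hunif K rfl

theorem tendsto_comp_of_isCompactOperator [NormedAlgebra ℝ 𝕜] (hS : ∀ i, ‖S i‖ ≤ M)
    (h : ∀ v, Tendsto (fun i => S i v) l (𝓝 (S₀ v))) {C : D →L[𝕜] E}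
    (hC : IsCompactOperator C) : Tendsto (fun i => (S i).comp C) l (𝓝 (S₀.comp C)) := by
  obtain ⟨K, hK, hCK⟩ := hC.image_closedBall_subset_compact 1
  have hunif := Metric.tendstoUniformlyOn_iff.mp (tendstoUniformlyOn_of_tendsto_apply hS h hK)
  refine Metric.tendsto_nhds.mpr fun ε hε => ?_
  filter_upwards [hunif (ε / 2) (half_pos hε)] with i hi
  rw [dist_eq_norm, ← sub_comp]
  refine (opNorm_le_of_unit_norm (half_pos hε).le fun x hx => ?_).trans_lt (half_lt_self hε)
  rw [comp_apply, sub_apply, ← dist_eq_norm, dist_comm]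
  exact (hi (C x) (hCK ⟨x, by simp [hx.le], rfl⟩)).le

end ContinuousLinearMap

section Hilbert

open scoped InnerProduct

variable {𝕜 E F : Type*} [RCLike 𝕜] [NormedAddCommGroup E] [InnerProductSpace 𝕜 E]
  [CompleteSpace E] [NormedAddCommGroup F] [InnerProductSpace 𝕜 F] [CompleteSpace F]

theorem ContinuousLinearMap.norm_adjoint_apply_sq_le (A : E →L[𝕜] F) (x : F) :
    ‖(A†) x‖ ^ 2 ≤ ‖A ((A†) x)‖ * ‖x‖ := by
  rw [apply_norm_sq_eq_inner_adjoint_left, adjoint_adjoint]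
  exact (RCLike.re_le_norm _).trans (norm_inner_le_norm _ _)

theorem IsCompactOperator.adjoint {A : E →L[𝕜] F} (hA : IsCompactOperator A) :
    IsCompactOperator (A†) := by
  obtain ⟨K, hK, hAK⟩ :=
    (show IsCompactOperator (A ∘L A†) from hA.comp_clm _).image_closedBall_subset_compact 1
  refine (isCompactOperator_iff_isCompact_closure_image_closedBall
    (A† : F →ₗ[𝕜] E) one_pos).mpr ?_
  refine (TotallyBounded.closure ?_).isCompact_of_isClosed isClosed_closure
  refine (hK.totallyBounded.subset hAK).image_of_uniformControl fun ε hε =>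
    ⟨ε ^ 2 / 4, by positivity, fun x hx y hy hxy => ?_⟩
  have hxy' : ‖x - y‖ ≤ 2 := by
    rw [mem_closedBall_zero_iff] at hx hy
    linarith [norm_sub_le x y]
  rw [dist_eq_norm, ← map_sub] at hxy ⊢
  refine lt_of_pow_lt_pow_left₀ 2 hε.le ?_
  calc ‖(A†) (x - y)‖ ^ 2 ≤ ‖A ((A†) (x - y))‖ * ‖x - y‖ := A.norm_adjoint_apply_sq_le _
    _ ≤ ε ^ 2 / 4 * 2 := by gcongr; exact hxy.le
    _ < ε ^ 2 := by linarith [pow_pos hε 2]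

variable {ι : Type*} {l : Filter ι}

theorem tendsto_mul_mul_of_isCompactOperator {V W : ι → E →L[𝕜] E} {V₀ W₀ K : E →L[𝕜] E}
    {M N : ℝ} (hV : ∀ i, ‖V i‖ ≤ M) (hVt : ∀ v, Tendsto (fun i => V i v) l (𝓝 (V₀ v)))
    (hW : ∀ i, ‖W i‖ ≤ N) (hWt : ∀ v, Tendsto (fun i => (star (W i)) v) l (𝓝 ((star W₀) v)))
    (hK : IsCompactOperator K) : Tendsto (fun i => V i * K * W i) l (𝓝 (V₀ * K * W₀)) := by
  have hVK : Tendsto (fun i => V i * K) l (𝓝 (V₀ * K)) :=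
    ContinuousLinearMap.tendsto_comp_of_isCompactOperator hV hVt hK
  have hVKW : Tendsto (fun i => (V i * K - V₀ * K) * W i) l (𝓝 0) :=
    (tendsto_sub_nhds_zero_iff.mpr hVK).zero_mul_isBoundedUnder_le (isBoundedUnder_of ⟨N, hW⟩)
  have hKW : Tendsto (fun i => V₀ * K * W i) l (𝓝 (V₀ * K * W₀)) := by
    have hadj : IsCompactOperator ⇑(star (V₀ * K)) := by
      rw [ContinuousLinearMap.star_eq_adjoint]
      exact (hK.clm_comp V₀).adjoint
    have : Tendsto (fun i => star (W i) * star (V₀ * K)) l (𝓝 (star W₀ * star (V₀ * K))) :=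
      ContinuousLinearMap.tendsto_comp_of_isCompactOperator
        (fun i => (norm_star (W i)).trans_le (hW i)) hWt hadj
    simpa [Function.comp_def, star_mul, mul_assoc] using (continuous_star.tendsto _).comp this
  simpa [sub_mul] using hVKW.add hKW

end Hilbert

theorem tendsto_norm_mul_C0smul_cocompact {G X : Type*} [Group G] [TopologicalSpace G]
    [TopologicalSpace X] [MulAction G X] [ContinuousSMul G X]
    (hproper : IsProperMap fun p : G × X => (p.1 • p.2, p.2)) (φ ψ : C₀(X, ℂ)) :
    Tendsto (fun g : G => ‖φ * C0smul g ψ‖) (cocompact G) (𝓝 0) := by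
  refine Metric.tendsto_nhds.mpr fun ε hε => ?_
  set δ := ε / (‖φ‖ + ‖ψ‖ + 1) with hδ
  have hδpos : 0 < δ := by positivity
  obtain ⟨Kφ, hKφ, hφ⟩ := mem_cocompact.mp (φ.zero_at_infty' (ball_mem_nhds 0 hδpos))
  obtain ⟨Kψ, hKψ, hψ⟩ := mem_cocompact.mp (ψ.zero_at_infty' (ball_mem_nhds 0 hδpos))
  -- properness: only a compact set of `g` moves some point of `Kψ` into `Kφ`
  have hW : IsCompact (Prod.fst '' ((fun p : G × X => (p.1 • p.2, p.2)) ⁻¹' (Kφ ×ˢ Kψ))) :=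
    (hproper.isCompact_preimage (hKφ.prod hKψ)).image continuous_fst
  filter_upwards [hW.compl_mem_cocompact] with g hg
  have hpt : ∀ x, ‖φ x * ψ (g⁻¹ • x)‖ ≤ δ * (‖φ‖ + ‖ψ‖) := by
    intro x
    have hφx : ‖φ x‖ ≤ ‖φ‖ := φ.toBCF.norm_coe_le_norm x
    have hψx : ‖ψ (g⁻¹ • x)‖ ≤ ‖ψ‖ := ψ.toBCF.norm_coe_le_norm _
    rw [norm_mul]
    by_cases hx : x ∈ Kφ
    · have hgx : g⁻¹ • x ∉ Kψ := fun hgx => hg ⟨(g, g⁻¹ • x), by simpa using ⟨hx, hgx⟩, rfl⟩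
      have : ‖ψ (g⁻¹ • x)‖ < δ := by simpa using hψ hgx
      nlinarith [norm_nonneg (φ x), norm_nonneg ψ]
    · have : ‖φ x‖ < δ := by simpa using hφ hx
      nlinarith [norm_nonneg (ψ (g⁻¹ • x)), norm_nonneg φ]
  have hnorm : ‖φ * C0smul g ψ‖ ≤ δ * (‖φ‖ + ‖ψ‖) :=
    (BoundedContinuousFunction.norm_le (by positivity)).mpr hpt
  rw [dist_zero_right, norm_norm]
  refine hnorm.trans_lt ?_
  rw [hδ, div_mul_eq_mul_div, div_lt_iff₀ (by positivity)]
  nlinarith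

theorem tendsto_mul_unitary_apply_cocompact {G X H : Type*} [Group G] [TopologicalSpace G]
    [TopologicalSpace X] [MulAction G X] [ContinuousSMul G X] [NormedAddCommGroup H]
    [InnerProductSpace ℂ H] [CompleteSpace H]
    (u : G →* unitary (H →L[ℂ] H)) (π : C₀(X, ℂ) →⋆ₙₐ[ℂ] (H →L[ℂ] H))
    (hπnd : Dense (Submodule.span ℂ (Set.range fun p : C₀(X, ℂ) × H => π p.1 p.2) : Set H))
    (hcov : ∀ (g : G) (φ : C₀(X, ℂ)),
      (u g : H →L[ℂ] H) * π φ * ((u g⁻¹ : unitary (H →L[ℂ] H)) : H →L[ℂ] H) = π (C0smul g φ))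
    (hproper : IsProperMap fun p : G × X => (p.1 • p.2, p.2)) (φ : C₀(X, ℂ)) (v : H) :
    Tendsto (fun g : G => (π φ * u g) v) (cocompact G) (𝓝 0) := by
  refine ContinuousLinearMap.tendsto_apply_of_dense_span_s8 (S₀ := 0)
    (fun g => (CStarRing.norm_mul_coe_unitary _ _).le) hπnd ?_ v
  rintro _ ⟨⟨ψ, w⟩, rfl⟩
  have hmove : ∀ g, (π φ * u g) (π ψ w) = π (φ * C0smul g ψ) ((u g : H →L[ℂ] H) w) := by
    intro g
    have hcomm : (u g : H →L[ℂ] H) * π ψ = π (C0smul g ψ) * u g := by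
      rw [← hcov, mul_assoc _ _ (u g : H →L[ℂ] H), ← MulMemClass.coe_mul, ← map_mul,
        inv_mul_cancel, map_one, OneMemClass.coe_one, mul_one]
    calc (π φ * u g) (π ψ w) = (π φ * ((u g : H →L[ℂ] H) * π ψ)) w := rfl
      _ = (π (φ * C0smul g ψ) * u g) w := by rw [hcomm, ← mul_assoc, ← map_mul]
  simp only [hmove, zero_apply]
  refine squeeze_zero_norm (fun g => ?_)
    (by simpa using (tendsto_norm_mul_C0smul_cocompact hproper φ ψ).mul_const ‖w‖)
  refine ((π _).le_opNorm _).trans ?_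
  rw [Unitary.norm_map]
  gcongr
  exact NonUnitalStarAlgHom.norm_apply_le π _

theorem statement_8
    (u : G →* unitary (H →L[ℂ] H))
    (hu : ∀ v : H, Continuous fun g : G => (u g : H →L[ℂ] H) v)
    (π : C₀(X, ℂ) →⋆ₙₐ[ℂ] (H →L[ℂ] H))
    (hπnd : Dense (Submodule.span ℂ (Set.range fun p : C₀(X, ℂ) × H => π p.1 p.2) : Set H))
    (hcov : ∀ (g : G) (φ : C₀(X, ℂ)),
      (u g : H →L[ℂ] H) * π φ * ((u g⁻¹ : unitary (H →L[ℂ] H)) : H →L[ℂ] H) = π (C0smul g φ))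
    (hproper : IsProperMap fun p : G × X => (p.1 • p.2, p.2))
    (T : H →L[ℂ] H) (hT : ∀ h : G, IsCompactOperator (⇑(conjU u h T - T)))
    (φ : C₀(X, ℂ)) (h : G) :
    InC0GK (fun g : G => π φ * (conjU u (g * h) T - conjU u g T)) := by
  have hf : ∀ g, π φ * (conjU u (g * h) T - conjU u g T)
      = π φ * u g * (conjU u h T - T) * ((u g⁻¹ : unitary (H →L[ℂ] H)) : H →L[ℂ] H) := by
    intro g
    simp only [conjU, mul_inv_rev, map_mul, MulMemClass.coe_mul, mul_sub, sub_mul, mul_assoc]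
  simp only [InC0GK, hf]
  have hK := hT h
  generalize conjU u h T - T = K at hK ⊢
  refine ⟨continuous_iff_continuousAt.mpr fun g₀ => ?_,
    fun g => (hK.clm_comp (π φ * (u g : H →L[ℂ] H))).comp_clm (u g⁻¹ : H →L[ℂ] H), ?_⟩
  · refine tendsto_mul_mul_of_isCompactOperator (M := ‖π φ‖) (N := 1)
      (fun g => (CStarRing.norm_mul_coe_unitary _ _).le) (fun v => ?_)
      (fun g => by
        simpa using (CStarRing.norm_mul_coe_unitary 1 (u g⁻¹)).le.trans ContinuousLinearMap.norm_id_le) (fun v => ?_) hK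
    · exact ((π φ).continuous.comp (hu v)).tendsto g₀
    · simpa [← Unitary.coe_star, Unitary.star_eq_inv] using (hu v).tendsto g₀
  · have hVK : Tendsto (fun g => π φ * u g * K) (cocompact G) (𝓝 (0 * K)) :=
      ContinuousLinearMap.tendsto_comp_of_isCompactOperator
        (fun g => (CStarRing.norm_mul_coe_unitary _ _).le)
        (tendsto_mul_unitary_apply_cocompact u π hπnd hcov hproper φ) hK
    simpa [CStarRing.norm_mul_coe_unitary] using hVK.norm

end
end

section
/- Let A be a unital C*-algebra and let D ∈ A be self-adjoint. For every λ ∈ [0,∞) the element 1 + λ² + D² is invertible in A, the A-valued function λ ↦ D(1 + λ² + D²)⁻¹ is Bochner integrable on [0,∞), and (2/π) ∫₀^∞ D(1 + λ² + D²)⁻¹ dλ = f(D), where f(D) denotes the continuous functional calculus of D applied to the function f(t) = t/(1 + t²)^{1/2}. -/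
/-!
Through the continuous functional calculus of `D` over its real spectrum, the integrand is
`cfc (t ↦ t / (1 + λ² + t²)) D`. On the spectrum this kernel is bounded by `‖D‖ ‖1‖ (1 + λ²)⁻¹`,
which is integrable, so the integral can be taken inside the functional calculus. What remains
is the scalar arctan integral `∫₀^∞ t / (1 + t² + λ²) dλ = (π / 2) · t / √(1 + t²)`.
-/

open MeasureTheory Set Real

lemma integral_Ioi_div_sq_add_sq {c : ℝ} (hc : 0 < c) :
    ∫ x in Ioi (0 : ℝ), c / (c ^ 2 + x ^ 2) = π / 2 := by
  have hrescale (x : ℝ) : c / (c ^ 2 + x ^ 2) = c⁻¹ * (1 + (c⁻¹ * x) ^ 2)⁻¹ := by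
    field_simp
  simp_rw [hrescale]
  rw [integral_const_mul, integral_comp_mul_left_Ioi (fun x => (1 + x ^ 2)⁻¹) 0 (inv_pos.2 hc)]
  simp [hc.ne']

lemma integral_Ioi_div_one_add_sq_add_sq (t : ℝ) :
    ∫ l in Ioi (0 : ℝ), t / (1 + l ^ 2 + t ^ 2) = π / 2 * (t / √(1 + t ^ 2)) := by
  have hc : 0 < √(1 + t ^ 2) := sqrt_pos.2 (by positivity)
  have hsq : √(1 + t ^ 2) ^ 2 = 1 + t ^ 2 := sq_sqrt (by positivity)
  have hsplit (l : ℝ) : t / (1 + l ^ 2 + t ^ 2)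
      = t / √(1 + t ^ 2) * (√(1 + t ^ 2) / (√(1 + t ^ 2) ^ 2 + l ^ 2)) := by
    rw [hsq]
    field_simp
    ring
  simp_rw [hsplit]
  rw [integral_const_mul, integral_Ioi_div_sq_add_sq hc, mul_comm]

lemma abs_div_add_sq_le {t c M : ℝ} (hc : 0 < c) (ht : |t| ≤ M) :
    |t / (c + t ^ 2)| ≤ M * c⁻¹ := by
  rw [abs_div, abs_of_pos (by positivity : 0 < c + t ^ 2), ← div_eq_mul_inv]
  exact div_le_div₀ ((abs_nonneg t).trans ht) ht hc (by nlinarith [sq_nonneg t])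

section CStarAlgebra

variable {A : Type*} [CStarAlgebra A] {a : A}

lemma cfc_const_add_sq (c : ℝ) (ha : IsSelfAdjoint a) :
    cfc (fun t : ℝ => c + t ^ 2) a = algebraMap ℂ A c + a ^ 2 := by
  rw [cfc_add a _ _, cfc_const c a, cfc_pow_id a 2, IsScalarTower.algebraMap_apply ℝ ℂ A,
    Complex.coe_algebraMap]

lemma isUnit_algebraMap_add_sq {c : ℝ} (hc : 0 < c) (ha : IsSelfAdjoint a) :
    IsUnit (algebraMap ℂ A c + a ^ 2) := by
  rw [← cfc_const_add_sq c ha]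
  exact isUnit_cfc _ a (by fun_prop) ha fun t _ => by positivity

lemma cfc_div_const_add_sq {c : ℝ} (hc : 0 < c) (ha : IsSelfAdjoint a) :
    cfc (fun t : ℝ => t / (c + t ^ 2)) a = a * Ring.inverse (algebraMap ℂ A c + a ^ 2) := by
  rw [cfc_map_div _ _ a (fun t _ => by positivity), cfc_id' ℝ a, cfc_const_add_sq c ha]

end CStarAlgebra

theorem statement_15
    {A : Type*} [CStarAlgebra A] (D : A) (hD : IsSelfAdjoint D) :
    (∀ l : ℝ, 0 ≤ l → IsUnit (algebraMap ℂ A (1 + (l : ℂ) ^ 2) + D ^ 2)) ∧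
    IntegrableOn
      (fun l : ℝ => D * Ring.inverse (algebraMap ℂ A (1 + (l : ℂ) ^ 2) + D ^ 2))
      (Set.Ici 0) ∧
    (2 / Real.pi) •
        (∫ l in Set.Ici (0 : ℝ), D * Ring.inverse (algebraMap ℂ A (1 + (l : ℂ) ^ 2) + D ^ 2)) =
      cfc (fun t : ℝ => t / Real.sqrt (1 + t ^ 2)) D := by
  have hcast (l : ℝ) : 1 + (l : ℂ) ^ 2 = ((1 + l ^ 2 : ℝ) : ℂ) := by push_cast; rfl
  have hintegrand : (fun l : ℝ => D * Ring.inverse (algebraMap ℂ A (1 + (l : ℂ) ^ 2) + D ^ 2))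
      = fun l => cfc (fun t : ℝ => t / (1 + l ^ 2 + t ^ 2)) D := by
    ext l
    rw [hcast, cfc_div_const_add_sq (by positivity) hD]
  have hcont : ContinuousOn (Function.uncurry fun l t : ℝ => t / (1 + l ^ 2 + t ^ 2))
      (Ici 0 ×ˢ spectrum ℝ D) :=
    (continuous_snd.div (by fun_prop) fun p => by positivity).continuousOn
  have hbound : ∀ᵐ l ∂(volume.restrict (Ici (0 : ℝ))), ∀ t ∈ spectrum ℝ D,
      ‖t / (1 + l ^ 2 + t ^ 2)‖ ≤ ‖D‖ * ‖(1 : A)‖ * (1 + l ^ 2)⁻¹ :=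
    .of_forall fun l t ht =>
      abs_div_add_sq_le (by positivity) (spectrum.norm_le_norm_mul_of_mem ht)
  have hbound_int : HasFiniteIntegral (fun l : ℝ => ‖D‖ * ‖(1 : A)‖ * (1 + l ^ 2)⁻¹)
      (volume.restrict (Ici 0)) :=
    (integrable_inv_one_add_sq.const_mul _).integrableOn.hasFiniteIntegral
  have hscalar : (fun t : ℝ => ∫ l in Ici (0 : ℝ), t / (1 + l ^ 2 + t ^ 2))
      = fun t => π / 2 * (t / √(1 + t ^ 2)) := funext fun t => by
    rw [integral_Ici_eq_integral_Ioi, integral_Ioi_div_one_add_sq_add_sq]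
  have hbounded_transform : Continuous fun t : ℝ => t / √(1 + t ^ 2) :=
    continuous_id.div (by fun_prop) fun t => (sqrt_pos.2 (by positivity)).ne'
  refine ⟨fun l _ => hcast l ▸ isUnit_algebraMap_add_sq (by positivity) hD, ?_, ?_⟩
  · rw [hintegrand]
    exact integrableOn_cfc measurableSet_Ici _ _ D hcont hbound hbound_int
  · rw [hintegrand, ← cfc_setIntegral measurableSet_Ici _ _ D hcont hbound hbound_int, hscalar,
      cfc_const_mul _ _ D hbounded_transform.continuousOn, smul_smul, div_mul_div_cancel₀ pi_ne_zero, div_self two_ne_zero, one_smul]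
end
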